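/- arXiv:2601.20824 — 3 statements merged into one kernel-verified Lean document; each statement's English description precedes it below -/
import Mathlib

section
/- The region R_2 = {(b_1, b_2) ∈ ℝ² : the polynomial x⁴ + b_1 x³ + b_2 x² + b_1 x + 1 has all roots on the unit circle occurring in conjugate pairs} is exactly the set {(b_1, b_2) : |b_1| ≤ 4 and 2|b_1| − 2 ≤ b_2 ≤ 2 + (b_1/2)²}. -/
/-!
Pairing each root `e^{iθ}` with its conjugate gives the real quadratic factor
`x² - 2 cos θ · x + 1`, so the quartic factors as required exactly when
`(b₁, b₂) = (-2(c₁ + c₂), 2 + 4 c₁ c₂)` for some `c₁, c₂ ∈ [-1, 1]`. Thus the region is the image of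
the square `[-1, 1]²` under (rescaled) elementary symmetric functions: `(p, q)` lies in it iff both
roots of `z² - p z + q` are real and in `[-1, 1]`, i.e. iff the discriminant is nonnegative and the
quadratic is nonnegative at `±1` with vertex `p / 2` in `[-1, 1]`.
-/

open Complex Set

lemma sub_exp_mul_sub_exp_neg (θ : ℝ) (x : ℂ) :
    (x - exp (θ * I)) * (x - exp (-θ * I)) = x ^ 2 - 2 * (Real.cos θ : ℂ) * x + 1 := by
  rw [exp_mul_I, exp_mul_I, cos_neg, sin_neg, ofReal_cos]
  linear_combination sin_sq_add_cos_sq (θ : ℂ) - sin (θ : ℂ) ^ 2 * I_sq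

lemma palindromic_quartic_eq_mul_iff (b₁ b₂ c₁ c₂ : ℝ) :
    (∀ x : ℂ, x ^ 4 + (b₁ : ℂ) * x ^ 3 + (b₂ : ℂ) * x ^ 2 + (b₁ : ℂ) * x + 1 =
        (x ^ 2 - 2 * (c₁ : ℂ) * x + 1) * (x ^ 2 - 2 * (c₂ : ℂ) * x + 1)) ↔
      b₁ = -2 * (c₁ + c₂) ∧ b₂ = 2 + 4 * (c₁ * c₂) := by
  constructor
  · intro h
    have at_one : ((2 + 2 * b₁ + b₂ : ℝ) : ℂ) = ((2 - 2 * c₁) * (2 - 2 * c₂) : ℝ) := by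
      push_cast; linear_combination h 1
    have at_neg_one : ((2 - 2 * b₁ + b₂ : ℝ) : ℂ) = ((2 + 2 * c₁) * (2 + 2 * c₂) : ℝ) := by
      push_cast; linear_combination h (-1)
    have h₁ := ofReal_injective at_one
    have h₂ := ofReal_injective at_neg_one
    constructor <;> linarith
  · rintro ⟨rfl, rfl⟩ x
    push_cast
    ring

lemma exists_mem_Icc_add_mul_iff (p q : ℝ) :
    (∃ c₁ ∈ Icc (-1 : ℝ) 1, ∃ c₂ ∈ Icc (-1 : ℝ) 1, c₁ + c₂ = p ∧ c₁ * c₂ = q) ↔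
      |p| ≤ 2 ∧ |p| - 1 ≤ q ∧ 4 * q ≤ p ^ 2 := by
  constructor
  · rintro ⟨c₁, ⟨h₁, h₁'⟩, c₂, ⟨h₂, h₂'⟩, rfl, rfl⟩
    refine ⟨abs_le.2 ⟨by linarith, by linarith⟩, ?_, by nlinarith [sq_nonneg (c₁ - c₂)]⟩
    rcases abs_cases (c₁ + c₂) with ⟨h, -⟩ | ⟨h, -⟩ <;> rw [h]
    · nlinarith [mul_nonneg (sub_nonneg.2 h₁') (sub_nonneg.2 h₂')]
    · nlinarith [mul_nonneg (neg_le_iff_add_nonneg.1 h₁) (neg_le_iff_add_nonneg.1 h₂)]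
  · rintro ⟨hp, hq, hdisc⟩
    obtain ⟨hp₁, hp₂⟩ := abs_le.1 hp
    have hq₁ : p - 1 ≤ q := by linarith [le_abs_self p]
    have hq₂ : -p - 1 ≤ q := by linarith [neg_abs_le p]
    set s := √(p ^ 2 - 4 * q)
    have hs : s ^ 2 = p ^ 2 - 4 * q := Real.sq_sqrt (by linarith)
    have hs₁ : s ≤ 2 - p := (Real.sqrt_le_left (by linarith)).2 (by nlinarith)
    have hs₂ : s ≤ 2 + p := (Real.sqrt_le_left (by linarith)).2 (by nlinarith)
    have hs₀ : 0 ≤ s := Real.sqrt_nonneg _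
    refine ⟨(p + s) / 2, ⟨by linarith, by linarith⟩, (p - s) / 2, ⟨by linarith, by linarith⟩,
      by ring, by linear_combination -hs / 4⟩

/-- The region `R₂` of pairs `(b₁, b₂)` such that `x⁴ + b₁x³ + b₂x² + b₁x + 1` has all
roots on the unit circle occurring in conjugate pairs is exactly
`{(b₁,b₂) : |b₁| ≤ 4, 2|b₁| - 2 ≤ b₂ ≤ 2 + (b₁/2)²}`. -/
theorem stmt2 :
    {b : ℝ × ℝ | ∃ θ₁ θ₂ : ℝ, ∀ x : ℂ,
        x ^ 4 + (b.1 : ℂ) * x ^ 3 + (b.2 : ℂ) * x ^ 2 + (b.1 : ℂ) * x + 1 =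
          (x - Complex.exp (θ₁ * Complex.I)) * (x - Complex.exp (-θ₁ * Complex.I)) *
            ((x - Complex.exp (θ₂ * Complex.I)) * (x - Complex.exp (-θ₂ * Complex.I)))} =
      {b : ℝ × ℝ | |b.1| ≤ 4 ∧ 2 * |b.1| - 2 ≤ b.2 ∧ b.2 ≤ 2 + (b.1 / 2) ^ 2} := by
  ext ⟨b₁, b₂⟩
  simp only [mem_ofPred_eq, sub_exp_mul_sub_exp_neg, palindromic_quartic_eq_mul_iff]
  have cos_params : (∃ θ₁ θ₂ : ℝ, b₁ = -2 * (Real.cos θ₁ + Real.cos θ₂) ∧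
      b₂ = 2 + 4 * (Real.cos θ₁ * Real.cos θ₂)) ↔
      ∃ c₁ ∈ Icc (-1 : ℝ) 1, ∃ c₂ ∈ Icc (-1 : ℝ) 1, c₁ + c₂ = -b₁ / 2 ∧ c₁ * c₂ = (b₂ - 2) / 4 := by
    simp only [← Real.range_cos, exists_range_iff]
    refine exists₂_congr fun θ₁ θ₂ => and_congr ?_ ?_ <;> constructor <;> intro h <;> linarith
  rw [cos_params, exists_mem_Icc_add_mul_iff, abs_div, abs_neg, abs_two]
  constructor <;> rintro ⟨h₁, h₂, h₃⟩ <;> refine ⟨?_, ?_, ?_⟩ <;> linarith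
end

section
/- Let P(x) ∈ ℤ[x] be a polynomial of degree e whose coefficients are not all divisible by a prime l. Then for every positive integer k, the number of residues x ∈ ℤ/l^k ℤ with P(x) ≡ 0 (mod l^k) is at most e · l^{k − ⌈k/e⌉}. -/
/-!
Split the residues `x` mod `l^k` according to `r = x mod l`, and write `x = r + l y`.
If `r` is a root of `P` mod `l` of multiplicity `m`, the Taylor expansion
`P(r + l y) = ∑ⱼ tⱼ lʲ yʲ` has `l ∤ tₘ`, so `P(r + l y) = l^s Q(y)` with `1 ≤ s ≤ m`,
`Q ≢ 0 mod l` and `deg (Q mod l) ≤ s` (every coefficient beyond degree `s` is divisible by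
`l^(s+1)`). The roots of `P` mod `l^k` above `r` are then `l^(s-1)` copies of the roots of `Q`
mod `l^(k-s)`, and by induction on `k` there are at most `s · l^(k - ⌈k/e⌉)` of them: passing
from `k` to `k - s` with `s ≤ e` lowers `⌈k/e⌉` by at most one. When `s ≥ k` the trivial bound
`l^(k-1)` suffices since then `⌈k/e⌉ = 1`. Summing over `r`, the multiplicities add up to at
most `deg P = e`.
-/

open Polynomial

namespace Nat

variable (p : ℕ → Prop) [DecidablePred p]

theorem count_mul_eq_sum_count (a b : ℕ) :
    count p (a * b) = ∑ r ∈ Finset.range a, count (fun y => p (r + a * y)) b := by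
  induction b with
  | zero => simp
  | succ b ih =>
    rw [mul_add_one, count_add, ih]
    simp only [count_succ, Finset.sum_add_distrib,
      count_eq_card_filter_range (fun k => p (a * b + k)), Finset.card_filter,
      add_comm _ (a * b)]

theorem count_mul_of_periodic {a : ℕ} (hp : Function.Periodic p a) (b : ℕ) :
    count p (a * b) = b * count p a := by
  induction b with
  | zero => simp
  | succ b ih =>
    have hshift (k : ℕ) : p (a * b + k) ↔ p k := by
      rw [add_comm, mul_comm]; exact iff_of_eq (hp.nat_mul b k)
    rw [mul_add_one, count_add, ih, add_one_mul]
    simp only [hshift]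

theorem pred_add_sub_ceilDiv_le {s k e : ℕ} (hs : 0 < s) (hsk : s < k) (hse : s ≤ e) :
    s - 1 + (k - s - (k - s) ⌈/⌉ e) ≤ k - k ⌈/⌉ e := by
  have he : 0 < e := hs.trans_le hse
  have h₁ : k ⌈/⌉ e ≤ (k - s) ⌈/⌉ e + 1 := by
    rw [ceilDiv_le_iff_le_mul he, mul_add_one]
    have : k - s ≤ e * ((k - s) ⌈/⌉ e) := (ceilDiv_le_iff_le_mul he).1 le_rfl
    omega
  have h₂ : (k - s) ⌈/⌉ e ≤ k - s := (ceilDiv_le_iff_le_mul he).2 (Nat.le_mul_of_pos_left _ he)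
  omega

theorem pow_pred_mul_le_mul_pow_sub_ceilDiv {l s k e N : ℕ} (hl : 0 < l) (hs : 0 < s)
    (hsk : s < k) (hse : s ≤ e) (hN : N ≤ s * l ^ (k - s - (k - s) ⌈/⌉ e)) :
    l ^ (s - 1) * N ≤ s * l ^ (k - k ⌈/⌉ e) :=
  calc l ^ (s - 1) * N ≤ l ^ (s - 1) * (s * l ^ (k - s - (k - s) ⌈/⌉ e)) :=
        Nat.mul_le_mul_left _ hN
    _ = s * l ^ (s - 1 + (k - s - (k - s) ⌈/⌉ e)) := by ring
    _ ≤ s * l ^ (k - k ⌈/⌉ e) :=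
        Nat.mul_le_mul_left _ (Nat.pow_le_pow_right hl (pred_add_sub_ceilDiv_le hs hsk hse))

theorem pow_pred_le_mul_pow_sub_ceilDiv {l s k e : ℕ} (hl : 0 < l) (hs : 0 < s) (hks : k ≤ s)
    (hse : s ≤ e) : l ^ (k - 1) ≤ s * l ^ (k - k ⌈/⌉ e) := by
  have : k ⌈/⌉ e ≤ 1 := (ceilDiv_le_iff_le_mul (hs.trans_le hse)).2 (by omega)
  exact (Nat.pow_le_pow_right hl (by omega)).trans (Nat.le_mul_of_pos_left _ hs)

end Nat

namespace Polynomial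

theorem map_taylor_coeff_rootMultiplicity_ne_zero {R S : Type*} [CommRing R] [CommRing S]
    (f : R →+* S) {P : R[X]} (hP : P.map f ≠ 0) (r : R) :
    f ((taylor r P).coeff ((P.map f).rootMultiplicity (f r))) ≠ 0 := by
  rw [← coeff_map, map_taylor, rootMultiplicity_eq_natTrailingDegree, ← taylor_apply]
  exact trailingCoeff_nonzero_iff_nonzero.2 ((taylor_injective _).ne_iff' (map_zero _) |>.2 hP)

theorem sum_rootMultiplicity_le_card_roots {R : Type*} [CommRing R] [IsDomain R]
    (p : R[X]) (s : Finset R) : ∑ a ∈ s, p.rootMultiplicity a ≤ Multiset.card p.roots := by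
  classical
  simp_rw [← count_roots]
  calc ∑ a ∈ s, p.roots.count a = ∑ a ∈ s, (p.roots.filter (· ∈ s)).count a :=
        Finset.sum_congr rfl fun a ha => (Multiset.count_filter_of_pos ha).symm
    _ = Multiset.card (p.roots.filter (· ∈ s)) :=
        Multiset.sum_count_eq_card fun a ha => (Multiset.mem_filter.1 ha).2
    _ ≤ Multiset.card p.roots := Multiset.card_le_card (Multiset.filter_le _ _)

theorem sum_range_rootMultiplicity_natCast_le {l : ℕ} [Fact l.Prime] (p : (ZMod l)[X]) :
    ∑ r ∈ Finset.range l, p.rootMultiplicity (r : ZMod l) ≤ Multiset.card p.roots := by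
  rw [← Finset.sum_image (f := (p.rootMultiplicity ·)) (g := ((↑) : ℕ → ZMod l))
    fun x hx y hy h => ?_]
  · exact p.sum_rootMultiplicity_le_card_roots _
  · rw [Finset.mem_coe, Finset.mem_range] at hx hy
    rwa [ZMod.natCast_eq_natCast_iff', Nat.mod_eq_of_lt hx, Nat.mod_eq_of_lt hy] at h

theorem map_intCastRingHom_zmod_eq_zero_iff {n : ℕ} {P : ℤ[X]} :
    P.map (Int.castRingHom (ZMod n)) = 0 ↔ C (n : ℤ) ∣ P := by
  rw [C_dvd_iff_dvd_coeff]
  simp only [Polynomial.ext_iff, coeff_map, coeff_zero, eq_intCast,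
    ZMod.intCast_zmod_eq_zero_iff_dvd]

theorem isRoot_map_intCastRingHom_iff {n : ℕ} {P : ℤ[X]} {r : ℤ} :
    (P.map (Int.castRingHom (ZMod n))).IsRoot r ↔ (n : ℤ) ∣ P.eval r := by
  rw [IsRoot, eval_intCast_map, Int.cast_id, eq_intCast, ZMod.intCast_zmod_eq_zero_iff_dvd]

theorem dvd_eval_add_mul_iff (n r y : ℤ) (P : ℤ[X]) :
    n ∣ P.eval (r + n * y) ↔ n ∣ P.eval r :=
  dvd_iff_dvd_of_dvd_sub <| (dvd_mul_right n y).trans <| by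
    simpa using sub_dvd_eval_sub (r + n * y) r P

theorem periodic_dvd_eval (n : ℕ) (P : ℤ[X]) :
    Function.Periodic (fun y : ℕ => (n : ℤ) ∣ P.eval (y : ℤ)) n := fun y => by
  simpa using dvd_eval_add_mul_iff n y 1 P

theorem dvd_coeff_taylor_comp_C_mul_X {n : ℕ} {P : ℤ[X]} {r : ℤ}
    (hr : (P.map (Int.castRingHom (ZMod n))).IsRoot r) (j : ℕ) :
    (n : ℤ) ∣ ((taylor r P).comp (C (n : ℤ) * X)).coeff j := by
  rw [comp_C_mul_X_coeff]
  rcases j with _ | j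
  · simpa using isRoot_map_intCastRingHom_iff.1 hr
  · exact dvd_mul_of_dvd_right (dvd_pow_self _ j.succ_ne_zero) _

theorem exists_eval_add_mul_eq_pow_mul {l : ℕ} (hl : l.Prime) {P : ℤ[X]}
    (hP : P.map (Int.castRingHom (ZMod l)) ≠ 0) {r : ℤ}
    (hr : (P.map (Int.castRingHom (ZMod l))).IsRoot r) :
    ∃ (s : ℕ) (Q : ℤ[X]), 0 < s ∧
      s ≤ (P.map (Int.castRingHom (ZMod l))).rootMultiplicity (r : ZMod l) ∧
      Q.map (Int.castRingHom (ZMod l)) ≠ 0 ∧ (Q.map (Int.castRingHom (ZMod l))).natDegree ≤ s ∧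
      ∀ y, P.eval (r + l * y) = l ^ s * Q.eval y := by
  set T := (taylor r P).comp (C (l : ℤ) * X) with hT
  have hl0 : (l : ℤ) ≠ 0 := by exact_mod_cast hl.ne_zero
  have hT0 : T ≠ 0 := by
    rw [hT, ne_eq, comp_C_mul_X_eq_zero_iff (mem_nonZeroDivisors_of_ne_zero hl0)]
    exact (taylor_injective _).ne_iff' (map_zero _) |>.2 (fun h => hP (by simp [h]))
  have hlC : Prime (C (l : ℤ)) := prime_C_iff.2 (Nat.prime_iff_prime_int.1 hl)
  obtain ⟨s, Q, hQ, hTQ⟩ := WfDvdMonoid.max_power_factor hT0 hlC.irreducible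
  have hTcoeff (j : ℕ) : (taylor r P).coeff j * l ^ j = l ^ s * Q.coeff j := by
    rw [← comp_C_mul_X_coeff, ← hT, hTQ, ← C_pow, coeff_C_mul]
  refine ⟨s, Q, ?_, ?_, map_intCastRingHom_zmod_eq_zero_iff.not.2 hQ, ?_, fun y => ?_⟩
  · refine Nat.pos_of_ne_zero fun hs => hQ ?_
    rw [hs, pow_zero, one_mul] at hTQ
    exact hTQ ▸ (C_dvd_iff_dvd_coeff _ _).2 (dvd_coeff_taylor_comp_C_mul_X hr)
  · by_contra! hms
    set m := (P.map (Int.castRingHom (ZMod l))).rootMultiplicity (r : ZMod l)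
    have : (l : ℤ) ^ m * l ∣ l ^ m * (taylor r P).coeff m := by
      rw [mul_comm _ ((taylor r P).coeff m), hTcoeff, ← pow_succ]
      exact dvd_mul_of_dvd_left (pow_dvd_pow _ hms) _
    have := (mul_dvd_mul_iff_left (pow_ne_zero m hl0)).1 this
    have hm := map_taylor_coeff_rootMultiplicity_ne_zero (Int.castRingHom (ZMod l)) hP r
    rw [eq_intCast, eq_intCast] at hm
    exact hm ((ZMod.intCast_zmod_eq_zero_iff_dvd _ _).2 this)
  · rw [natDegree_le_iff_coeff_eq_zero]
    intro N hN
    have : (l : ℤ) ^ s * l ∣ l ^ s * Q.coeff N := by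
      rw [← hTcoeff, ← pow_succ]
      exact dvd_mul_of_dvd_right (pow_dvd_pow _ hN) _
    rw [coeff_map, eq_intCast, ZMod.intCast_zmod_eq_zero_iff_dvd]
    exact (mul_dvd_mul_iff_left (pow_ne_zero s hl0)).1 this
  · have := congrArg (eval y) hTQ
    simp only [hT, eval_comp, taylor_eval, eval_mul, eval_C, eval_X, eval_pow] at this
    rw [← this, add_comm]

def rootCountMod (n : ℕ) (P : ℤ[X]) : ℕ :=
  Nat.count (fun x : ℕ => (n : ℤ) ∣ P.eval (x : ℤ)) n

theorem card_isRoot_map_zmod (n : ℕ) [NeZero n] (P : ℤ[X]) :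
    Nat.card {x : ZMod n // (P.map (Int.castRingHom (ZMod n))).IsRoot x} =
      rootCountMod n P := by
  have hiff (k : ℕ) : (P.map (Int.castRingHom (ZMod n))).IsRoot k ↔ (n : ℤ) ∣ P.eval k := by
    rw [← Int.cast_natCast, isRoot_map_intCastRingHom_iff]
  rw [rootCountMod, Nat.count_eq_card_filter_range, ← Nat.card_eq_finsetCard]
  refine Nat.card_congr
    { toFun := fun x => ⟨x.1.val, Finset.mem_filter.2 ⟨Finset.mem_range.2 x.1.val_lt, ?_⟩⟩
      invFun := fun k => ⟨k.1, (hiff k).2 (Finset.mem_filter.1 k.2).2⟩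
      left_inv := fun x => Subtype.ext (ZMod.natCast_zmod_val x.1)
      right_inv := fun k => Subtype.ext <|
        ZMod.val_cast_of_lt (Finset.mem_range.1 (Finset.mem_filter.1 k.2).1) }
  rw [← hiff, ZMod.natCast_zmod_val]
  exact x.2

theorem rootCountMod_pow_eq_sum {l k : ℕ} (hk : 0 < k) (P : ℤ[X]) :
    rootCountMod (l ^ k) P = ∑ r ∈ Finset.range l,
      Nat.count (fun y : ℕ => (l : ℤ) ^ k ∣ P.eval (r + l * y)) (l ^ (k - 1)) := by
  have h := Nat.count_mul_eq_sum_count (fun x : ℕ => ((l ^ k : ℕ) : ℤ) ∣ P.eval x) l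
    (l ^ (k - 1))
  rw [← pow_succ', Nat.sub_add_cancel hk] at h
  rw [rootCountMod, h]
  push_cast
  rfl

theorem count_dvd_eval_add_mul_eq_zero {l k : ℕ} (hk : 0 < k) {P : ℤ[X]} {r : ℤ}
    (hr : ¬ (P.map (Int.castRingHom (ZMod l))).IsRoot r) (b : ℕ) :
    Nat.count (fun y : ℕ => (l : ℤ) ^ k ∣ P.eval (r + l * y)) b = 0 :=
  Nat.count_iff_forall_not.2 fun _ _ hy => hr <| isRoot_map_intCastRingHom_iff.2 <|
    (dvd_eval_add_mul_iff _ _ _ P).1 ((dvd_pow_self _ hk.ne').trans hy)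

theorem count_dvd_eval_add_mul_eq_pow_mul_rootCountMod {l k s : ℕ} (hl : 0 < l)
    {P Q : ℤ[X]} {r : ℤ} (hPQ : ∀ y, P.eval (r + l * y) = l ^ s * Q.eval y) (hs : 0 < s)
    (hsk : s < k) :
    Nat.count (fun y : ℕ => (l : ℤ) ^ k ∣ P.eval (r + l * y)) (l ^ (k - 1)) =
      l ^ (s - 1) * rootCountMod (l ^ (k - s)) Q := by
  have hiff (y : ℕ) :
      (l : ℤ) ^ k ∣ P.eval (r + l * y) ↔ ((l ^ (k - s) : ℕ) : ℤ) ∣ Q.eval y := by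
    rw [hPQ, ← Nat.add_sub_cancel' hsk.le, pow_add, Nat.add_sub_cancel_left, Nat.cast_pow,
      mul_dvd_mul_iff_left (pow_ne_zero _ (by exact_mod_cast hl.ne'))]
  simp_rw [hiff]
  rw [show k - 1 = (k - s) + (s - 1) by omega, pow_add,
    Nat.count_mul_of_periodic _ (periodic_dvd_eval _ Q), rootCountMod]

theorem rootCountMod_pow_le {l : ℕ} [hl : Fact l.Prime] {e k : ℕ} (hk : 0 < k) {P : ℤ[X]}
    (hP : P.map (Int.castRingHom (ZMod l)) ≠ 0)
    (hD : Multiset.card (P.map (Int.castRingHom (ZMod l))).roots ≤ e) :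
    rootCountMod (l ^ k) P ≤
      Multiset.card (P.map (Int.castRingHom (ZMod l))).roots * l ^ (k - k ⌈/⌉ e) := by
  induction k using Nat.strong_induction_on generalizing P with
  | _ k ih =>
  set P' := P.map (Int.castRingHom (ZMod l))
  have hfiber (r : ℕ) : Nat.count (fun y : ℕ => (l : ℤ) ^ k ∣ P.eval (r + l * y)) (l ^ (k - 1))
      ≤ P'.rootMultiplicity (r : ZMod l) * l ^ (k - k ⌈/⌉ e) := by
    by_cases hr : P'.IsRoot (r : ℤ)
    swap
    · rw [count_dvd_eval_add_mul_eq_zero hk hr]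
      exact Nat.zero_le _
    obtain ⟨s, Q, hs, hsm, hQ, hQdeg, hPQ⟩ := exists_eval_add_mul_eq_pow_mul hl.out hP hr
    rw [Int.cast_natCast] at hsm
    have hse : s ≤ e := hsm.trans <| (count_roots P' ▸ Multiset.count_le_card _ _).trans hD
    have hQD := (card_roots' _).trans hQdeg
    refine le_trans ?_ (Nat.mul_le_mul_right _ hsm)
    rcases lt_or_ge s k with hsk | hks
    · rw [count_dvd_eval_add_mul_eq_pow_mul_rootCountMod hl.out.pos hPQ hs hsk]
      exact Nat.pow_pred_mul_le_mul_pow_sub_ceilDiv hl.out.pos hs hsk hse <|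
        (ih _ (by omega) (by omega) hQ (hQD.trans hse)).trans (Nat.mul_le_mul_right _ hQD)
    · exact (Nat.count_le _).trans (Nat.pow_pred_le_mul_pow_sub_ceilDiv hl.out.pos hs hks hse)
  calc rootCountMod (l ^ k) P
      = ∑ r ∈ Finset.range l,
          Nat.count (fun y : ℕ => (l : ℤ) ^ k ∣ P.eval (r + l * y)) (l ^ (k - 1)) :=
        rootCountMod_pow_eq_sum hk P
    _ ≤ ∑ r ∈ Finset.range l, P'.rootMultiplicity (r : ZMod l) * l ^ (k - k ⌈/⌉ e) :=
        Finset.sum_le_sum fun r _ => hfiber r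
    _ ≤ Multiset.card P'.roots * l ^ (k - k ⌈/⌉ e) := by
        rw [← Finset.sum_mul]
        exact Nat.mul_le_mul_right _ (sum_range_rootMultiplicity_natCast_le P')

end Polynomial

theorem stmt6_general (l : ℕ) (hl : l.Prime) (P : Polynomial ℤ) (e : ℕ)
    (hdeg : P.natDegree = e)
    (hcont : ∃ i, ¬ (l : ℤ) ∣ P.coeff i) :
    ∀ k : ℕ, 0 < k →
      Nat.card {x : ZMod (l ^ k) // (P.map (Int.castRingHom (ZMod (l ^ k)))).IsRoot x}
        ≤ e * l ^ (k - (k + e - 1) / e) := by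
  intro k hk
  have : Fact l.Prime := ⟨hl⟩
  have : NeZero (l ^ k) := ⟨pow_ne_zero _ hl.ne_zero⟩
  have hP : P.map (Int.castRingHom (ZMod l)) ≠ 0 := by
    rw [Ne, map_intCastRingHom_zmod_eq_zero_iff, C_dvd_iff_dvd_coeff]
    exact fun h => hcont.elim fun i hi => hi (h i)
  have hD : Multiset.card (P.map (Int.castRingHom (ZMod l))).roots ≤ e :=
    (card_roots' _).trans (natDegree_map_le.trans hdeg.le)
  rw [card_isRoot_map_zmod]
  exact (rootCountMod_pow_le hk hP hD).trans (Nat.mul_le_mul_right _ hD)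

/-- Let `P ∈ ℤ[x]` have degree `e > 0` with not all coefficients divisible by a prime
`l`.  Then for every `k ≥ 1` the number of solutions of `P(x) ≡ 0 (mod l^k)` is at most
`e · l^(k - ⌈k/e⌉)`. -/
theorem stmt6 (l : ℕ) (hl : l.Prime) (P : Polynomial ℤ) (e : ℕ) (he : 0 < e)
    (hdeg : P.natDegree = e)
    (hcont : ∃ i, ¬ (l : ℤ) ∣ P.coeff i) :
    ∀ k : ℕ, 0 < k →
      Nat.card {x : ZMod (l ^ k) // (P.map (Int.castRingHom (ZMod (l ^ k)))).IsRoot x}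
        ≤ e * l ^ (k - (k + e - 1) / e) :=
  stmt6_general l hl P e hdeg hcont
end

section
/- Let L/K be an extension of fields, let α be algebraic over K with minimal polynomial of degree d, and β algebraic over K generating a Galois extension K(β)/K of degree n, such that the Galois closure of K(α) over K intersects K(β) in K, and the characteristic of K is 0. Then α + β generates the compositum K(α, β), which has degree dn over K. -/
/-!
If two embeddings `σ, τ` of `K(α, β)` agree on `α + β`, then `τ β - σ β = σ α - τ α` lies both in
`K(β)` (which is normal) and in the normal closure of `K(α)`, hence in `K`. Writing `τ = σ ∘ g`
on `K(β)`, the automorphism `g` translates `β` by this constant `c`, so `g ^ m` translates it by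
`m • c`; since `g` has finite order and `char K = 0`, `c = 0`. Thus `σ = τ`, so `α + β` is a
primitive element of the compositum. Its degree is `d * n` because a Galois extension meeting
`K(α)` trivially is linearly disjoint from it.
-/

open IntermediateField

theorem AlgEquiv.eq_zero_of_apply_eq_add_algebraMap {K L : Type*} [Field K] [CharZero K]
    [Ring L] [Nontrivial L] [Algebra K L] {g : L ≃ₐ[K] L} (hg : IsOfFinOrder g) {x : L} {c : K}
    (h : g x = x + algebraMap K L c) : c = 0 := by
  have hpow : ∀ m : ℕ, (g ^ m) x = x + algebraMap K L (m • c) := by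
    intro m
    induction m with
    | zero => simp
    | succ m ih => rw [pow_succ, mul_apply, h, map_add, ih, commutes, succ_nsmul, map_add, add_assoc]
  have hper := hpow (orderOf g)
  rw [pow_orderOf_eq_one, one_apply, left_eq_add, map_eq_zero_iff _ (algebraMap K L).injective,
    smul_eq_zero] at hper
  exact hper.resolve_left hg.orderOf_pos.ne'

theorem IntermediateField.eq_zero_of_algHom_apply_eq_add_algebraMap {K Ω : Type*} [Field K]
    [CharZero K] [Field Ω] [Algebra K Ω] (B : IntermediateField K Ω) [Normal K B]
    [FiniteDimensional K B] (f₁ f₂ : B →ₐ[K] Ω) {x : B} {c : K}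
    (h : f₂ x = f₁ x + algebraMap K Ω c) : c = 0 := by
  set g₁ := f₁.restrictNormal' B
  set g₂ := f₂.restrictNormal' B
  have hcomm (f : B →ₐ[K] Ω) : ((f.restrictNormal' B x : B) : Ω) = f x :=
    f.restrictNormal_commutes B x
  have hg₂ : g₂ x = g₁ x + algebraMap K B c := by
    apply Subtype.ext
    rw [IntermediateField.coe_add, hcomm, hcomm]
    exact h
  refine (g₁⁻¹ * g₂).eq_zero_of_apply_eq_add_algebraMap (isOfFinOrder_of_finite _) (x := x) ?_
  rw [AlgEquiv.mul_apply, hg₂, map_add, AlgEquiv.commutes]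
  exact congrArg (· + _) (g₁.symm_apply_apply x)

theorem IntermediateField.algHom_apply_eq_of_apply_add_eq {K Ω : Type*} [Field K] [CharZero K]
    [Field Ω] [Algebra K Ω] {A B : IntermediateField K Ω} [Normal K B] [FiniteDimensional K B]
    (hAB : normalClosure K A Ω ⊓ B = ⊥) {f₁ f₂ : A →ₐ[K] Ω} {g₁ g₂ : B →ₐ[K] Ω} {x : A} {y : B}
    (h : f₁ x + g₁ y = f₂ x + g₂ y) : g₁ y = g₂ y := by
  have hN : f₁ x - f₂ x ∈ normalClosure K A Ω :=
    sub_mem (f₁.fieldRange_le_normalClosure ⟨x, rfl⟩) (f₂.fieldRange_le_normalClosure ⟨x, rfl⟩)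
  have hB : g₂ y - g₁ y ∈ B :=
    sub_mem ((g₂.fieldRange_of_normal).le ⟨y, rfl⟩) ((g₁.fieldRange_of_normal).le ⟨y, rfl⟩)
  obtain ⟨c, hc⟩ : g₂ y - g₁ y ∈ Set.range (algebraMap K Ω) := by
    rw [← mem_bot, ← hAB]
    exact ⟨by rwa [show g₂ y - g₁ y = f₁ x - f₂ x by linear_combination -h], hB⟩
  have hc0 := B.eq_zero_of_algHom_apply_eq_add_algebraMap g₁ g₂ (x := y) (c := c)
    (by rw [hc]; ring)
  rw [hc0, map_zero] at hc
  exact (sub_eq_zero.1 hc.symm).symm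

theorem IntermediateField.adjoin_simple_eq_of_injective_eval {K Ω : Type*} [Field K] [Field Ω]
    [Algebra K Ω] [IsAlgClosed Ω] {M : IntermediateField K Ω} [FiniteDimensional K M]
    [Algebra.IsSeparable K M] (x : M) (h : Function.Injective fun σ : M →ₐ[K] Ω ↦ σ x) :
    K⟮(x : Ω)⟯ = M := by
  have htop : K⟮x⟯ = ⊤ :=
    (Field.primitive_element_iff_algHom_eq_of_eval' K Ω (fun _ ↦ IsAlgClosed.splits _) x).2 h
  have := congrArg (map M.val) htop
  rwa [adjoin_map, Set.image_singleton, ← AlgHom.fieldRange_eq_map, fieldRange_val] at this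

/-- If `α` has degree `d` over `K`, `K(β)/K` is Galois of degree `n`, the Galois
closure of `K(α)` meets `K(β)` in `K`, and `char K = 0`, then `α + β` generates the
compositum `K(α, β)`, which has degree `d·n` over `K`. -/
theorem stmt13 (K Ω : Type*) [Field K] [CharZero K] [Field Ω] [Algebra K Ω]
    [IsAlgClosed Ω]
    (α β : Ω) (hα : IsIntegral K α) (hβ : IsIntegral K β)
    (d n : ℕ) (hd : (minpoly K α).natDegree = d)
    (hGal : IsGalois K K⟮β⟯) (hn : Module.finrank K K⟮β⟯ = n)
    (hint : normalClosure K K⟮α⟯ Ω ⊓ K⟮β⟯ = ⊥) :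
    K⟮α + β⟯ = K⟮α⟯ ⊔ K⟮β⟯ ∧ Module.finrank K K⟮α + β⟯ = d * n := by
  have : FiniteDimensional K K⟮α⟯ := adjoin.finiteDimensional hα
  have : FiniteDimensional K K⟮β⟯ := adjoin.finiteDimensional hβ
  have hprim : K⟮α + β⟯ = K⟮α⟯ ⊔ K⟮β⟯ := by
    let a : ↥(K⟮α⟯ ⊔ K⟮β⟯) := ⟨α, le_sup_left (a := K⟮α⟯) (mem_adjoin_simple_self K α)⟩
    let b : ↥(K⟮α⟯ ⊔ K⟮β⟯) := ⟨β, le_sup_right (a := K⟮α⟯) (mem_adjoin_simple_self K β)⟩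
    refine adjoin_simple_eq_of_injective_eval (a + b) fun σ τ hστ ↦ ?_
    have hsum : σ a + σ b = τ a + τ b := (map_add σ a b).symm.trans (hστ.trans (map_add τ a b))
    have hb : σ b = τ b := algHom_apply_eq_of_apply_add_eq hint
      (f₁ := σ.comp (inclusion le_sup_left)) (f₂ := τ.comp (inclusion le_sup_left))
      (g₁ := σ.comp (inclusion le_sup_right)) (g₂ := τ.comp (inclusion le_sup_right))
      (x := AdjoinSimple.gen K α) (y := AdjoinSimple.gen K β) hsum
    have ha : σ a = τ a := add_right_cancel (hb ▸ hsum)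
    refine algHom_ext_of_eq_adjoin K (adjoin_union (F := K)).symm ?_
    rintro x (rfl | rfl)
    exacts [ha, hb]
  have hdisj : K⟮β⟯ ⊓ K⟮α⟯ = ⊥ :=
    eq_bot_iff.2 fun z hz ↦ hint ▸ ⟨le_normalClosure K⟮α⟯ hz.2, hz.1⟩
  refine ⟨hprim, ?_⟩
  rw [hprim, sup_comm, (LinearDisjoint.of_inf_eq_bot hdisj).finrank_sup, hn, adjoin.finrank hα,
    hd, mul_comm]
end
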